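/- For every index i and every sign vector m ∈ {+1, −1}^τ, the operator identity P_i · Π(m) = m_i · Π(m·ê^rev_i) holds, where (m·ê^rev_i)_j = m_j · ε(i, j) for j ≥ i and (m·ê^rev_i)_j = m_j for j < i. (Multiplying by a measured Pauli operator flips the measurement outcomes according to its reverse error vector.) -/
import Mathlib



noncomputable section
open Matrix

/-- A sign `±1`, modelled as a unit of `ℤ`, coerced into `ℂ`. -/
def signC (u : ℤˣ) : ℂ := ((u : ℤ) : ℂ)

/-- Measurement projector `Π_j(m_j) = (1 + m_j P_j)/2`. -/
def proj {d : ℕ} (A : Matrix (Fin d) (Fin d) ℂ) (u : ℤˣ) : Matrix (Fin d) (Fin d) ℂ :=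
  (2⁻¹ : ℂ) • (1 + signC u • A)

/-- Chronologically ordered product of measurement projectors
`Π(m) = Π_t(m_t) ⋯ Π_1(m_1)` (0-indexed, latest measurement leftmost):
`PiOp P m t` is the product for the measurements `0, …, t`. -/
def PiOp {d : ℕ} (P : ℕ → Matrix (Fin d) (Fin d) ℂ) (m : ℕ → ℤˣ) :
    ℕ → Matrix (Fin d) (Fin d) ℂ
  | 0 => proj (P 0) (m 0)
  | (t+1) => proj (P (t+1)) (m (t+1)) * PiOp P m t

/-- Extend a sign vector on `Fin τ` to all of `ℕ` by `+1`. -/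
def extSign (τ : ℕ) (m : Fin τ → ℤˣ) : ℕ → ℤˣ :=
  fun j => if h : j < τ then m ⟨j, h⟩ else 1

/-- The reverse multiplicative error vector `ê^rev_i ∈ {±1}^τ`:
`ê^rev_i(j) = ε(i,j)` for `j ≥ i` and `+1` for `j < i`. -/
def ehatRev {τ : ℕ} (ε : ℕ → ℕ → ℤˣ) (i : Fin τ) : Fin τ → ℤˣ :=
  fun j => if (i : ℕ) ≤ (j : ℕ) then ε (i : ℕ) (j : ℕ) else 1

lemma signC_mul (a b : ℤˣ) : signC (a * b) = signC a * signC b := by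
  simp [signC]

lemma signC_sq (u : ℤˣ) : signC u * signC u = 1 := by
  rw [← signC_mul, Int.units_mul_self]; simp [signC]

lemma PiOp_congr {d : ℕ} (P : ℕ → Matrix (Fin d) (Fin d) ℂ) (m₁ m₂ : ℕ → ℤˣ)
    (t : ℕ) (h : ∀ j ≤ t, m₁ j = m₂ j) : PiOp P m₁ t = PiOp P m₂ t := by
  induction t with
  | zero => simp [PiOp, h 0 le_rfl]
  | succ t ih =>
      rw [PiOp, PiOp, h (t+1) le_rfl, ih fun j hj => h j (hj.trans (Nat.le_succ t))]

lemma pauli_mul_proj_comm {d : ℕ} (P : ℕ → Matrix (Fin d) (Fin d) ℂ)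
    (ε : ℕ → ℕ → ℤˣ)
    (hcomm : ∀ i j, P i * P j = signC (ε i j) • (P j * P i))
    (i j : ℕ) (u : ℤˣ) :
    P i * proj (P j) u = proj (P j) (u * ε i j) * P i := by
  simp only [proj, Matrix.mul_smul, Matrix.smul_mul, mul_add, add_mul, mul_one, one_mul,
    signC_mul, hcomm i j, smul_smul]

lemma pauli_mul_proj_self {d : ℕ} (P : ℕ → Matrix (Fin d) (Fin d) ℂ)
    (hinv : ∀ j, P j * P j = 1) (i : ℕ) (u : ℤˣ) :
    P i * proj (P i) u = signC u • proj (P i) u := by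
  simp only [proj, Matrix.mul_smul, mul_add, mul_one, smul_smul, hinv i, smul_add]
  have h : signC u * (2⁻¹ * signC u) = (2⁻¹ : ℂ) := by
    rw [mul_comm (2⁻¹ : ℂ), ← mul_assoc, signC_sq, one_mul]
  rw [h, mul_comm (signC u) (2⁻¹ : ℂ), add_comm]

lemma pauli_mul_PiOp_aux {d : ℕ}
    (P : ℕ → Matrix (Fin d) (Fin d) ℂ)
    (hinv : ∀ j, P j * P j = 1)
    (ε : ℕ → ℕ → ℤˣ)
    (hεdiag : ∀ i, ε i i = 1)
    (hcomm : ∀ i j, P i * P j = signC (ε i j) • (P j * P i))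
    (i : ℕ) (m : ℕ → ℤˣ) :
    ∀ t, i ≤ t →
      P i * PiOp P m t =
        signC (m i) • PiOp P (fun j => if i ≤ j then m j * ε i j else m j) t := by
  intro t
  induction t with
  | zero =>
      intro hi
      interval_cases i
      simp [PiOp, hεdiag 0, pauli_mul_proj_self P hinv 0 (m 0)]
  | succ t ih =>
      intro hi
      rcases Nat.lt_or_ge i (t+1) with h | h
      · have hit : i ≤ t := Nat.lt_succ_iff.mp h
        rw [PiOp, ← mul_assoc, pauli_mul_proj_comm P ε hcomm i (t+1) (m (t+1)),
          mul_assoc, ih hit, PiOp]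
        simp [Matrix.mul_smul, hit.trans (Nat.le_succ t), Nat.le_succ_of_le hit]
      · have hi' : i = t + 1 := le_antisymm hi h
        subst hi'
        rw [PiOp, PiOp, ← mul_assoc, pauli_mul_proj_self P hinv (t+1) (m (t+1)),
          Matrix.smul_mul]
        congr 2
        · simp [hεdiag]
        · exact PiOp_congr P _ _ t fun j hj => by
            simp [show ¬ t + 1 ≤ j from by omega]

/-- multiplying by a measured Pauli operator flips the
measurement outcomes according to its reverse error vector:
`P_i · Π(m) = m_i · Π(m · ê^rev_i)`. -/
theorem pauli_mul_PiOp
    {d τ : ℕ} (hd : 1 ≤ d) (hτ : 1 ≤ τ)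
    (P : ℕ → Matrix (Fin d) (Fin d) ℂ)
    (hherm : ∀ j, (P j)ᴴ = P j)
    (hinv : ∀ j, P j * P j = 1)
    (ε : ℕ → ℕ → ℤˣ)
    (hεdiag : ∀ i, ε i i = 1)
    (hεsymm : ∀ i j, ε i j = ε j i)
    (hcomm : ∀ i j, P i * P j = signC (ε i j) • (P j * P i))
    (i : Fin τ) (m : Fin τ → ℤˣ) :
    P (i : ℕ) * PiOp P (extSign τ m) (τ - 1) =
      signC (m i) • PiOp P (extSign τ (m * ehatRev ε i)) (τ - 1) := by
  have hit : (i : ℕ) ≤ τ - 1 := Nat.le_sub_one_of_lt i.isLt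
  rw [pauli_mul_PiOp_aux P hinv ε hεdiag hcomm (i : ℕ) (extSign τ m) (τ - 1) hit]
  have hmi : extSign τ m (i : ℕ) = m i := by simp [extSign]
  rw [hmi]
  congr 1
  refine PiOp_congr P _ _ (τ - 1) fun j hj => ?_
  have hjτ : j < τ := lt_of_le_of_lt hj (Nat.sub_lt hτ one_pos)
  simp only [extSign, hjτ, dif_pos, ehatRev, Pi.mul_apply]
  split <;> simp
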